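/- Let X be a nonnegative random variable with mean μ > 0 and variance σ² satisfying σ² ≤ C μ² / n² for constants C > 0 and n ≥ 1. Then |E[√X] − √μ| ≤ K √μ / n² for some constant K depending only on C. -/

import Mathlib

/-!
Writing `s = √μ`, the tangent-line expansion of the square root at `μ` is exact up to a square:
`√x = s + (x - μ) / (2 s) - (√x - s)² / (2 s)`. Taking expectations kills the linear term, so
`√μ - E[√X] = E[(√X - s)²] / (2 s)`. Since `(√x + s)² ≥ μ`, the remainder satisfies
`(√x - s)² ≤ (x - μ)² / μ`, whence `0 ≤ √μ - E[√X] ≤ Var X / (2 μ √μ)`.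
-/

open MeasureTheory ProbabilityTheory

namespace Real

lemma sq_sqrt_sub_sqrt_le {x m : ℝ} (hx : 0 ≤ x) (hm : 0 < m) :
    (√x - √m) ^ 2 ≤ (x - m) ^ 2 / m := by
  have hfactor : x - m = (√x + √m) * (√x - √m) := by
    rw [← sq_sub_sq, sq_sqrt hx, sq_sqrt hm.le]
  have hsum : m ≤ (√x + √m) ^ 2 :=
    calc m = √m ^ 2 := (sq_sqrt hm.le).symm
      _ ≤ (√x + √m) ^ 2 := by gcongr; exact le_add_of_nonneg_left (sqrt_nonneg x)
  rw [le_div_iff₀ hm, hfactor, mul_pow, mul_comm ((√x + √m) ^ 2)]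
  exact mul_le_mul_of_nonneg_left hsum (sq_nonneg _)

end Real

section

variable {Ω : Type*} [MeasurableSpace Ω] {P : Measure Ω} {X : Ω → ℝ}

lemma memLp_two_sqrt (hX : Integrable X P) (hX0 : 0 ≤ᵐ[P] X) :
    MemLp (fun ω ↦ √(X ω)) 2 P :=
  (memLp_two_iff_integrable_sq
    (Real.continuous_sqrt.comp_aestronglyMeasurable hX.aestronglyMeasurable)).2 <|
    hX.congr <| hX0.mono fun _ h ↦ (Real.sq_sqrt h).symm

variable [IsProbabilityMeasure P]

lemma integral_sq_sqrt_sub_sqrt (hX : Integrable X P) (hX0 : 0 ≤ᵐ[P] X) (c : ℝ) (hc : 0 ≤ c) :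
    ∫ ω, (√(X ω) - √c) ^ 2 ∂P = ∫ ω, X ω ∂P - 2 * √c * ∫ ω, √(X ω) ∂P + c := by
  have hsqrt := (memLp_two_sqrt hX hX0).integrable one_le_two
  have hexpand : (fun ω ↦ (√(X ω) - √c) ^ 2) =ᵐ[P] fun ω ↦ X ω - 2 * √c * √(X ω) + c :=
    hX0.mono fun ω h ↦ by
      simp only
      rw [sub_sq, Real.sq_sqrt h, Real.sq_sqrt hc]
      ring
  have hlin : Integrable (fun ω ↦ X ω - 2 * √c * √(X ω)) P := hX.sub (hsqrt.const_mul _)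
  rw [integral_congr_ae hexpand, integral_add hlin (integrable_const c),
    integral_sub hX (hsqrt.const_mul _), integral_const_mul, integral_const, probReal_univ,
    one_smul]

lemma integral_sq_sqrt_sub_sqrt_integral_le (hX : MemLp X 2 P) (hX0 : 0 ≤ᵐ[P] X)
    (hμ : 0 < ∫ ω, X ω ∂P) :
    ∫ ω, (√(X ω) - √(∫ ω, X ω ∂P)) ^ 2 ∂P ≤ variance X P / ∫ ω, X ω ∂P := by
  have hrem : Integrable (fun ω ↦ (√(X ω) - √(∫ ω, X ω ∂P)) ^ 2) P :=
    ((memLp_two_sqrt (hX.integrable one_le_two) hX0).sub (memLp_const _)).integrable_sq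
  have hcent : Integrable (fun ω ↦ (X ω - ∫ ω, X ω ∂P) ^ 2 / ∫ ω, X ω ∂P) P :=
    (hX.sub (memLp_const _)).integrable_sq.div_const _
  rw [variance_eq_integral hX.aestronglyMeasurable.aemeasurable, ← integral_div]
  exact integral_mono_ae hrem hcent <| hX0.mono fun _ h ↦ Real.sq_sqrt_sub_sqrt_le h hμ

theorem abs_integral_sqrt_sub_sqrt_integral_le (hX : MemLp X 2 P) (hX0 : 0 ≤ᵐ[P] X)
    (hμ : 0 < ∫ ω, X ω ∂P) :
    |∫ ω, √(X ω) ∂P - √(∫ ω, X ω ∂P)| ≤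
      variance X P / (2 * (∫ ω, X ω ∂P) * √(∫ ω, X ω ∂P)) := by
  set μ := ∫ ω, X ω ∂P
  set V := ∫ ω, (√(X ω) - √μ) ^ 2 ∂P
  have hs : 0 < √μ := Real.sqrt_pos.2 hμ
  have hV := integral_sq_sqrt_sub_sqrt (hX.integrable one_le_two) hX0 μ hμ.le
  have hgap : √μ - ∫ ω, √(X ω) ∂P = V / (2 * √μ) := by
    field_simp
    linarith [Real.sq_sqrt hμ.le]
  rw [abs_sub_comm, hgap, abs_of_nonneg (by positivity)]
  calc V / (2 * √μ) ≤ variance X P / μ / (2 * √μ) := by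
        gcongr
        exact integral_sq_sqrt_sub_sqrt_integral_le hX hX0 hμ
    _ = variance X P / (2 * μ * √μ) := by ring

end

theorem delta_method_sqrt_general (C : ℝ) :
    ∃ K : ℝ, ∀ (n : ℕ), 1 ≤ n →
      ∀ (Ω : Type) (_ : MeasurableSpace Ω) (P : Measure Ω), IsProbabilityMeasure P →
        ∀ (X : Ω → ℝ), MemLp X 2 P → (∀ ω, 0 ≤ X ω) →
          ∀ (μ : ℝ), ∫ ω, X ω ∂P = μ → 0 < μ →
            variance X P ≤ C * μ ^ 2 / (n : ℝ) ^ 2 →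
            |(∫ ω, Real.sqrt (X ω) ∂P) - Real.sqrt μ| ≤ K * Real.sqrt μ / (n : ℝ) ^ 2 := by
  refine ⟨C / 2, fun n _ Ω _ P _ X hX hX0 μ hmean hμ hvar => ?_⟩
  subst hmean
  calc _ ≤ variance X P / (2 * (∫ ω, X ω ∂P) * √(∫ ω, X ω ∂P)) :=
        abs_integral_sqrt_sub_sqrt_integral_le hX (ae_of_all _ hX0) hμ
    _ ≤ C * (∫ ω, X ω ∂P) ^ 2 / (n : ℝ) ^ 2 / (2 * (∫ ω, X ω ∂P) * √(∫ ω, X ω ∂P)) := by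
        gcongr
    _ = C / 2 * √(∫ ω, X ω ∂P) / (n : ℝ) ^ 2 := by
        field_simp
        rw [Real.sq_sqrt hμ.le]

/-- Delta-method lemma: if a nonnegative random variable `X` has mean `μ > 0` and
variance `σ² ≤ C μ²/n²`, then `|E[√X] − √μ| ≤ K √μ/n²` with `K` depending only on `C`. -/
theorem delta_method_sqrt (C : ℝ) (hC : 0 < C) :
    ∃ K : ℝ, ∀ (n : ℕ), 1 ≤ n →
      ∀ (Ω : Type) (_ : MeasurableSpace Ω) (P : Measure Ω), IsProbabilityMeasure P →
        ∀ (X : Ω → ℝ), MemLp X 2 P → (∀ ω, 0 ≤ X ω) →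
          ∀ (μ : ℝ), ∫ ω, X ω ∂P = μ → 0 < μ →
            variance X P ≤ C * μ ^ 2 / (n : ℝ) ^ 2 →
            |(∫ ω, Real.sqrt (X ω) ∂P) - Real.sqrt μ| ≤ K * Real.sqrt μ / (n : ℝ) ^ 2 :=
  delta_method_sqrt_general C
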